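/- Let B be an order-2d array, I ⊆ [d], and B^{(I)} the order-2(d−|I|) array obtained by summing B along the diagonals of the axis pairs (l, l+d) for l ∈ I. Let I₁,…,I_κ be a partition of the remaining axes and extend it by the pairs {j, j+d} for j ∈ I to a partition of [2d]. Then ‖B^{(I)}‖_{I₁,…,I_κ} ≤ √(Π_{l∈I} n_l) · ‖B‖_{I₁,…,I_{κ+|I|}}. -/

import Mathlib

/-!
Given unit vectors `α_m` on the blocks of the partition of the remaining axes, extend them by the
normalized diagonals `δ_l(a, b) = [a = b] / √n_l` on the pair blocks `{l, l + d}`, `l ∈ I`. Each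
`δ_l` is again a unit vector, and contracting `B` against the extended family gives exactly
`(∏_{l ∈ I} n_l)^{-1/2}` times the contraction of `B^{(I)}` against the `α_m`. If some `n_l`
vanishes, both norms are suprema of empty sets or of `{0}`.
-/

open Finset

/-- The partition norm `‖A‖_{I₁,…,I_κ}` of an array `A`, where the partition of the
axes `ι` into blocks `β` is encoded by the assignment map `c : ι → β`. -/
noncomputable def partitionNorm {ι : Type*} [Fintype ι] [DecidableEq ι] (n : ι → ℕ)
    {β : Type*} [Fintype β] [DecidableEq β]
    (A : (∀ l, Fin (n l)) → ℝ) (c : ι → β) : ℝ :=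
  sSup {r : ℝ | ∃ α : ∀ m : β, (∀ l : {x : ι // c x = m}, Fin (n l.1)) → ℝ,
    (∀ m, (∑ j, α m j ^ 2) = 1) ∧
      r = ∑ i, A i * ∏ m, α m fun l => i l.1}

section PartitionNorm

variable {ι : Type*} [Fintype ι] [DecidableEq ι] {n : ι → ℕ}
  {β : Type*} [Fintype β] [DecidableEq β]

lemma sum_sq_prod_eq_one {κ : β → Type*} [∀ m, Fintype (κ m)] {α : ∀ m, κ m → ℝ}
    (hα : ∀ m, ∑ j, α m j ^ 2 = 1) : ∑ j : ∀ m, κ m, (∏ m, α m (j m)) ^ 2 = 1 := by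
  calc ∑ j : ∀ m, κ m, (∏ m, α m (j m)) ^ 2 = ∑ j : ∀ m, κ m, ∏ m, α m (j m) ^ 2 := by
        simp only [prod_pow]
    _ = 1 := by rw [← Fintype.prod_sum fun m j => α m j ^ 2]; simp [hα]

lemma exists_sum_sq_eq_one (κ : Type*) [Fintype κ] [DecidableEq κ] [Nonempty κ] :
    ∃ v : κ → ℝ, ∑ j, v j ^ 2 = 1 :=
  ⟨fun j => if j = Classical.arbitrary κ then 1 else 0, by simp [ite_pow]⟩

variable (A : (∀ l, Fin (n l)) → ℝ) (c : ι → β)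

lemma contraction_le_sqrt_sum_sq (α : ∀ m, (∀ l : {x // c x = m}, Fin (n l.1)) → ℝ)
    (hα : ∀ m, ∑ j, α m j ^ 2 = 1) :
    ∑ i, A i * ∏ m, α m (fun l => i l.1) ≤ √(∑ i, A i ^ 2) := by
  let e : (∀ l, Fin (n l)) ≃ ∀ m, ∀ l : {x // c x = m}, Fin (n l.1) :=
    Equiv.piCongrFiberwise fun _ => Equiv.refl _
  calc ∑ i, A i * ∏ m, α m (fun l => i l.1) = ∑ j, A (e.symm j) * ∏ m, α m (j m) :=
        Fintype.sum_equiv e _ _ fun i => by rw [e.symm_apply_apply]; rfl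
    _ ≤ √(∑ j, A (e.symm j) ^ 2) *
          √(∑ j : ∀ m, ∀ l : {x // c x = m}, Fin (n l.1), (∏ m, α m (j m)) ^ 2) :=
        Real.sum_mul_le_sqrt_mul_sqrt univ (fun j => A (e.symm j)) fun j => ∏ m, α m (j m)
    _ = √(∑ i, A i ^ 2) := by
        rw [sum_sq_prod_eq_one hα, Real.sqrt_one, mul_one, e.symm.sum_comp (fun i => A i ^ 2)]

lemma le_partitionNorm (α : ∀ m, (∀ l : {x // c x = m}, Fin (n l.1)) → ℝ)
    (hα : ∀ m, ∑ j, α m j ^ 2 = 1) :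
    ∑ i, A i * ∏ m, α m (fun l => i l.1) ≤ partitionNorm n A c :=
  le_csSup ⟨√(∑ i, A i ^ 2), by
    rintro _ ⟨α', hα', rfl⟩
    exact contraction_le_sqrt_sum_sq A c α' hα'⟩ ⟨α, hα, rfl⟩

lemma partitionNorm_le {a : ℝ} (hn : ∀ l, 0 < n l)
    (h : ∀ α : ∀ m, (∀ l : {x // c x = m}, Fin (n l.1)) → ℝ, (∀ m, ∑ j, α m j ^ 2 = 1) →
      ∑ i, A i * ∏ m, α m (fun l => i l.1) ≤ a) :
    partitionNorm n A c ≤ a := by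
  have (m : β) : Nonempty (∀ l : {x // c x = m}, Fin (n l.1)) := ⟨fun l => ⟨0, hn l⟩⟩
  choose α hα using fun m => exists_sum_sq_eq_one (∀ l : {x // c x = m}, Fin (n l.1))
  exact csSup_le ⟨_, α, hα, rfl⟩ fun _ ⟨α, hα, hr⟩ => hr ▸ h α hα

lemma partitionNorm_eq_zero_of_eq_zero {l : ι} (hl : n l = 0) : partitionNorm n A c = 0 := by
  have : IsEmpty (∀ l' : {x // c x = c l}, Fin (n l'.1)) :=
    ⟨fun j => (Fin.cast hl (j ⟨l, rfl⟩)).elim0⟩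
  refine (congrArg sSup (Set.eq_empty_of_forall_notMem ?_)).trans Real.sSup_empty
  rintro _ ⟨α, hα, -⟩
  simpa using hα (c l)

lemma partitionNorm_zero : partitionNorm n (0 : (∀ l, Fin (n l)) → ℝ) c = 0 := by
  simp only [partitionNorm, Pi.zero_apply, zero_mul, sum_const_zero]
  refine le_antisymm (Real.sSup_nonpos ?_) (Real.sSup_nonneg ?_) <;> rintro _ ⟨-, -, rfl⟩ <;> rfl

end PartitionNorm

lemma sum_sq_diagonal_eq_one (κ : Type*) [Fintype κ] [DecidableEq κ] [Nonempty κ] :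
    ∑ p : κ × κ, (if p.1 = p.2 then (√(Fintype.card κ))⁻¹ else 0) ^ 2 = 1 := by
  have hκ : (0 : ℝ) < Fintype.card κ := by exact_mod_cast Fintype.card_pos
  simp [Fintype.sum_prod_type, ite_pow, inv_pow, Real.sq_sqrt hκ.le, hκ.ne']

section PartialTrace

variable {d : ℕ} (n : Fin d → ℕ) (S : Finset (Fin d))

abbrev RestIndex : Type :=
  ∀ y : {x : Fin d // x ∉ S} ⊕ {x : Fin d // x ∉ S},
    Fin (Sum.elim (fun x => n x.1) (fun x => n x.1) y)

abbrev TraceIndex : Type := ∀ s : {x : Fin d // x ∈ S}, Fin (n s.1)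

def mergeIndex (i : RestIndex n S) (k₁ k₂ : TraceIndex n S) :
    ∀ l : Fin d ⊕ Fin d, Fin (Sum.elim n n l) := fun l =>
  Sum.rec
    (fun x => if h : x ∈ S then k₁ ⟨x, h⟩ else i (Sum.inl ⟨x, h⟩))
    (fun x => if h : x ∈ S then k₂ ⟨x, h⟩ else i (Sum.inr ⟨x, h⟩)) l

def partialTrace (B : (∀ l : Fin d ⊕ Fin d, Fin (Sum.elim n n l)) → ℝ) : RestIndex n S → ℝ :=
  fun i => ∑ k, B (mergeIndex n S i k k)

lemma partialTrace_eq_zero (B : (∀ l : Fin d ⊕ Fin d, Fin (Sum.elim n n l)) → ℝ) {l : Fin d}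
    (hlS : l ∈ S) (hl : n l = 0) : partialTrace n S B = 0 := by
  have : IsEmpty (TraceIndex n S) := ⟨fun k => (Fin.cast hl (k ⟨l, hlS⟩)).elim0⟩
  funext i
  simp [partialTrace]

def splitIndex :
    (∀ l : Fin d ⊕ Fin d, Fin (Sum.elim n n l)) ≃
      RestIndex n S × TraceIndex n S × TraceIndex n S where
  toFun i :=
    (fun | Sum.inl x => i (Sum.inl x.1) | Sum.inr x => i (Sum.inr x.1),
      fun s => i (Sum.inl s.1), fun s => i (Sum.inr s.1))
  invFun p := mergeIndex n S p.1 p.2.1 p.2.2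
  left_inv i := by
    funext l
    rcases l with x | x <;> by_cases hx : x ∈ S <;> simp [mergeIndex, hx] <;> rfl
  right_inv := by
    rintro ⟨i, k₁, k₂⟩
    refine Prod.ext ?_ (Prod.ext ?_ ?_) <;> funext y
    · rcases y with ⟨x, hx⟩ | ⟨x, hx⟩ <;> simp [mergeIndex, hx] <;> rfl
    all_goals simp [mergeIndex, y.2]

variable {β : Type*} (c : {x : Fin d // x ∉ S} ⊕ {x : Fin d // x ∉ S} → β)

def extendPartition : Fin d ⊕ Fin d → β ⊕ {x : Fin d // x ∈ S} :=
  Sum.elim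
    (fun x => if h : x ∈ S then Sum.inr ⟨x, h⟩ else Sum.inl (c (Sum.inl ⟨x, h⟩)))
    (fun x => if h : x ∈ S then Sum.inr ⟨x, h⟩ else Sum.inl (c (Sum.inr ⟨x, h⟩)))

variable {S c}

lemma extendPartition_inl_eq_inl {x : Fin d} {b : β} :
    extendPartition S c (Sum.inl x) = Sum.inl b ↔ ∃ h : x ∉ S, c (Sum.inl ⟨x, h⟩) = b := by
  by_cases hx : x ∈ S <;> simp [extendPartition, hx]

lemma extendPartition_inr_eq_inl {x : Fin d} {b : β} :
    extendPartition S c (Sum.inr x) = Sum.inl b ↔ ∃ h : x ∉ S, c (Sum.inr ⟨x, h⟩) = b := by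
  by_cases hx : x ∈ S <;> simp [extendPartition, hx]

lemma extendPartition_inl_eq_inr {x : Fin d} {s : {x // x ∈ S}} :
    extendPartition S c (Sum.inl x) = Sum.inr s ↔ x = s.1 := by
  by_cases hx : x ∈ S <;> simp [extendPartition, hx, Subtype.ext_iff]
  rintro rfl
  exact hx s.2

lemma extendPartition_inr_eq_inr {x : Fin d} {s : {x // x ∈ S}} :
    extendPartition S c (Sum.inr x) = Sum.inr s ↔ x = s.1 := by
  by_cases hx : x ∈ S <;> simp [extendPartition, hx, Subtype.ext_iff]
  rintro rfl
  exact hx s.2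

variable (c)

def restBlockEquiv (b : β) :
    (∀ x : {x // extendPartition S c x = Sum.inl b}, Fin (Sum.elim n n x.1)) ≃
      ∀ y : {y // c y = b}, Fin (Sum.elim (fun x => n x.1) (fun x => n x.1) y.1) where
  toFun j
    | ⟨Sum.inl x, hy⟩ => j ⟨Sum.inl x.1, extendPartition_inl_eq_inl.2 ⟨x.2, hy⟩⟩
    | ⟨Sum.inr x, hy⟩ => j ⟨Sum.inr x.1, extendPartition_inr_eq_inl.2 ⟨x.2, hy⟩⟩
  invFun j
    | ⟨Sum.inl x, hx⟩ =>
      j ⟨Sum.inl ⟨x, (extendPartition_inl_eq_inl.1 hx).1⟩, (extendPartition_inl_eq_inl.1 hx).2⟩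
    | ⟨Sum.inr x, hx⟩ =>
      j ⟨Sum.inr ⟨x, (extendPartition_inr_eq_inl.1 hx).1⟩, (extendPartition_inr_eq_inl.1 hx).2⟩
  left_inv j := by
    funext x
    rcases x with ⟨x | x, hx⟩ <;> rfl
  right_inv j := by
    funext y
    rcases y with ⟨⟨x, hx⟩ | ⟨x, hx⟩, hy⟩ <;> rfl

def traceBlockEquiv (s : {x : Fin d // x ∈ S}) :
    (∀ x : {x // extendPartition S c x = Sum.inr s}, Fin (Sum.elim n n x.1)) ≃
      Fin (n s.1) × Fin (n s.1) where
  toFun j := (j ⟨Sum.inl s.1, extendPartition_inl_eq_inr.2 rfl⟩,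
    j ⟨Sum.inr s.1, extendPartition_inr_eq_inr.2 rfl⟩)
  invFun p
    | ⟨Sum.inl x, hx⟩ => Fin.cast (congrArg n (extendPartition_inl_eq_inr.1 hx).symm) p.1
    | ⟨Sum.inr x, hx⟩ => Fin.cast (congrArg n (extendPartition_inr_eq_inr.1 hx).symm) p.2
  left_inv j := by
    funext x
    rcases x with ⟨x | x, hx⟩
    · obtain rfl := extendPartition_inl_eq_inr.1 hx
      rfl
    · obtain rfl := extendPartition_inr_eq_inr.1 hx
      rfl
  right_inv p := rfl

noncomputable def extendVectors
    (α : ∀ b : β,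
      (∀ y : {y // c y = b}, Fin (Sum.elim (fun x => n x.1) (fun x => n x.1) y.1)) → ℝ) :
    ∀ m : β ⊕ {x : Fin d // x ∈ S},
      (∀ x : {x // extendPartition S c x = m}, Fin (Sum.elim n n x.1)) → ℝ
  | Sum.inl b => fun j => α b (restBlockEquiv n c b j)
  | Sum.inr s => fun j => let p := traceBlockEquiv n c s j
      if p.1 = p.2 then (√(n s.1))⁻¹ else 0

variable {n c}

lemma extendVectors_sum_sq [DecidableEq β] (hn : ∀ l ∈ S, 0 < n l)
    {α : ∀ b : β, (∀ y : {y // c y = b}, Fin (Sum.elim (fun x => n x.1) (fun x => n x.1) y.1)) → ℝ}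
    (hα : ∀ b, ∑ j, α b j ^ 2 = 1) : ∀ m, ∑ j, extendVectors n c α m j ^ 2 = 1
  | Sum.inl b => ((restBlockEquiv n c b).sum_comp (fun j => α b j ^ 2)).trans (hα b)
  | Sum.inr s => by
    have : Nonempty (Fin (n s.1)) := ⟨⟨0, hn s.1 s.2⟩⟩
    refine ((traceBlockEquiv n c s).sum_comp
      (fun p => (if p.1 = p.2 then (√(n s.1))⁻¹ else 0) ^ 2)).trans ?_
    simpa using sum_sq_diagonal_eq_one (Fin (n s.1))

lemma prod_extendVectors_mergeIndex [Fintype β]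
    (α : ∀ b : β, (∀ y : {y // c y = b}, Fin (Sum.elim (fun x => n x.1) (fun x => n x.1) y.1)) → ℝ)
    (i : RestIndex n S) (k₁ k₂ : TraceIndex n S) :
    ∏ m, extendVectors n c α m (fun x => mergeIndex n S i k₁ k₂ x.1) =
      (∏ b, α b fun y => i y.1) * ∏ s, if k₁ s = k₂ s then (√(n s.1))⁻¹ else 0 := by
  rw [Fintype.prod_sum_type]
  congr 1
  · refine prod_congr rfl fun b _ => congrArg (α b) ?_
    funext y
    rcases y with ⟨⟨x, hx⟩ | ⟨x, hx⟩, hy⟩ <;> simp [restBlockEquiv, mergeIndex, hx] <;> rfl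
  · refine prod_congr rfl fun s _ => ?_
    simp [extendVectors, traceBlockEquiv, mergeIndex, s.2]

lemma prod_diagonal_eq (k₁ k₂ : TraceIndex n S) :
    (∏ s, if k₁ s = k₂ s then (√(n s.1))⁻¹ else 0 : ℝ) =
      if k₁ = k₂ then (√(∏ l ∈ S, (n l : ℝ)))⁻¹ else 0 := by
  rw [Fintype.prod_ite_zero, Real.sqrt_prod _ fun l _ => Nat.cast_nonneg (n l), prod_inv_distrib,
    ← prod_coe_sort S]
  simp [funext_iff]

lemma sum_partialTrace_mul_prod_eq [Fintype β] [DecidableEq β] (hn : ∀ l ∈ S, 0 < n l)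
    (B : (∀ l : Fin d ⊕ Fin d, Fin (Sum.elim n n l)) → ℝ)
    (α : ∀ b : β,
      (∀ y : {y // c y = b}, Fin (Sum.elim (fun x => n x.1) (fun x => n x.1) y.1)) → ℝ) :
    ∑ i, partialTrace n S B i * ∏ b, α b (fun y => i y.1) =
      √(∏ l ∈ S, (n l : ℝ)) * ∑ i, B i * ∏ m, extendVectors n c α m (fun x => i x.1) := by
  set P := √(∏ l ∈ S, (n l : ℝ))
  have hP : P ≠ 0 := (Real.sqrt_pos.2 (prod_pos fun l hl => by exact_mod_cast hn l hl)).ne'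
  suffices ∑ i, B i * ∏ m, extendVectors n c α m (fun x => i x.1) =
      P⁻¹ * ∑ i, partialTrace n S B i * ∏ b, α b (fun y => i y.1) by
    rw [this, mul_inv_cancel_left₀ hP]
  calc ∑ i, B i * ∏ m, extendVectors n c α m (fun x => i x.1)
      = ∑ p : RestIndex n S × TraceIndex n S × TraceIndex n S,
          B (mergeIndex n S p.1 p.2.1 p.2.2) *
            ∏ m, extendVectors n c α m (fun x => mergeIndex n S p.1 p.2.1 p.2.2 x.1) :=
        (Fintype.sum_equiv (splitIndex n S).symm _ _ fun _ => rfl).symm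
    _ = ∑ i, ∑ k₁, ∑ k₂, if k₁ = k₂ then
          P⁻¹ * (B (mergeIndex n S i k₁ k₂) * ∏ b, α b fun y => i y.1) else 0 := by
        simp only [Fintype.sum_prod_type, prod_extendVectors_mergeIndex, prod_diagonal_eq]
        refine sum_congr rfl fun i _ => sum_congr rfl fun k₁ _ => sum_congr rfl fun k₂ _ => ?_
        split_ifs <;> ring
    _ = P⁻¹ * ∑ i, partialTrace n S B i * ∏ b, α b (fun y => i y.1) := by
        simp [partialTrace, Finset.mul_sum, Finset.sum_mul, mul_left_comm]

end PartialTrace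

/-- Norm bound for the array `B^{(I)}` obtained from an order-`2d` array `B` by summing
along the diagonals of the axis pairs `(l, l+d)`, `l ∈ S`: for any partition `c` of the
remaining axes, extended to a partition of all axes by the pairs `{l, l+d}`, `l ∈ S`,
one has `‖B^{(S)}‖_c ≤ √(∏_{l∈S} n_l) ‖B‖_{c'}`. -/
theorem partial_trace_norm_bound (d : ℕ) (n : Fin d → ℕ)
    (B : (∀ l : Fin d ⊕ Fin d, Fin (Sum.elim n n l)) → ℝ) (S : Finset (Fin d))
    {β : Type*} [Fintype β] [DecidableEq β]
    (c : ({x : Fin d // x ∉ S} ⊕ {x : Fin d // x ∉ S}) → β) :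
    partitionNorm (Sum.elim (fun x => n x.1) (fun x => n x.1))
        (fun i => ∑ k : ∀ l : {x : Fin d // x ∈ S}, Fin (n l.1),
          B (fun l => Sum.rec
            (fun x => if h : x ∈ S then k ⟨x, h⟩ else i (Sum.inl ⟨x, h⟩))
            (fun x => if h : x ∈ S then k ⟨x, h⟩ else i (Sum.inr ⟨x, h⟩)) l))
        c ≤
      Real.sqrt (∏ l ∈ S, (n l : ℝ)) *
        partitionNorm (Sum.elim n n) B
          (Sum.elim
            (fun x => if h : x ∈ S then Sum.inr ⟨x, h⟩ else Sum.inl (c (Sum.inl ⟨x, h⟩)))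
            (fun x => if h : x ∈ S then Sum.inr ⟨x, h⟩ else Sum.inl (c (Sum.inr ⟨x, h⟩)))
            : Fin d ⊕ Fin d → β ⊕ {x : Fin d // x ∈ S}) := by
  change partitionNorm _ (partialTrace n S B) c ≤
    √(∏ l ∈ S, (n l : ℝ)) * partitionNorm (Sum.elim n n) B (extendPartition S c)
  by_cases hn : ∀ l, 0 < n l
  · refine partitionNorm_le _ _ (fun y => ?_) fun α hα => ?_
    · rcases y with ⟨l, _⟩ | ⟨l, _⟩ <;> exact hn l
    rw [sum_partialTrace_mul_prod_eq (fun l _ => hn l)]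
    exact mul_le_mul_of_nonneg_left
      (le_partitionNorm _ _ _ (extendVectors_sum_sq (fun l _ => hn l) hα)) (Real.sqrt_nonneg _)
  · obtain ⟨l, hl⟩ : ∃ l, n l = 0 := by simpa [Nat.pos_iff_ne_zero] using hn
    rw [partitionNorm_eq_zero_of_eq_zero B _ (l := Sum.inl l) hl, mul_zero]
    by_cases hlS : l ∈ S
    · rw [partialTrace_eq_zero n S B hlS hl, partitionNorm_zero]
    · exact (partitionNorm_eq_zero_of_eq_zero _ _ (l := Sum.inl ⟨l, hlS⟩) hl).le
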